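/- arXiv:1910.08717 — 2 statements merged into one kernel-verified Lean document; each statement's English description precedes it below -/
import Mathlib

section
/- Let A and B be nonempty finite subsets of ℝ² such that A lies strictly above the horizontal line y = c, B lies strictly below it, A ∪ B is in general position, and A ∪ B has at least three points. Then there are exactly two bridges of (A,B), i.e., exactly two pairs (a,b) with a ∈ A and b ∈ B such that the closed segment [a,b] is contained in the frontier of convexHull(A ∪ B). -/
/-!
For `a ∈ A`, `b ∈ B` let `x(a, b)` be the abscissa where the segment `[a, b]` crosses `y = c`.
A segment with endpoints in `A ∪ B` lies on the boundary of the hull iff its line supports the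
hull, i.e. all of `A ∪ B` lies weakly on one side of it. The identity `abscissaAt_sub_mul` shows
that the pairs with all points weakly to their left are exactly the minimisers of `x`, and general
position makes the minimiser strict; symmetrically on the right with maximisers. So the bridges
are the minimiser and the maximiser of `x`, which differ since a third point of `A ∪ B` cannot lie
on the common line.
-/

open Set

section SupportingLine

variable {E : Type*} [NormedAddCommGroup E] [NormedSpace ℝ E] {S : Set E} {a b : E}

theorem segment_subset_frontier_convexHull_of_support {f : StrongDual ℝ E} (hf : f ≠ 0)
    (ha : a ∈ S) (hb : b ∈ S) (hab : f a = f b) (hS : ∀ s ∈ S, f s ≤ f a) :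
    segment ℝ a b ⊆ frontier (convexHull ℝ S) := by
  have hseg : segment ℝ a b ⊆ convexHull ℝ S := segment_subset_convexHull ha hb
  have hint : interior (convexHull ℝ S) ⊆ f ⁻¹' Iio (f a) := by
    rw [← image_subset_iff, ← interior_Iic]
    refine interior_maximal (image_subset_iff.2 fun x hx => ?_)
      (f.isOpenMap_of_ne_zero hf _ isOpen_interior)
    exact convexHull_min hS ((convex_Iic (f a)).affine_preimage f.toLinearMap.toAffineMap)
      (interior_subset hx)
  intro x hx
  refine ⟨subset_closure (hseg hx), fun hxint => (show f x < f a from hint hxint).ne ?_⟩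
  obtain ⟨t, s, -, -, hts, rfl⟩ := hx
  simp [← hab, ← add_mul, hts]

theorem exists_support_of_segment_subset_frontier (hS : (interior (convexHull ℝ S)).Nonempty)
    (ha : a ∈ S) (hb : b ∈ S) (hseg : segment ℝ a b ⊆ frontier (convexHull ℝ S)) :
    ∃ f : StrongDual ℝ E, f ≠ 0 ∧ f a = f b ∧ ∀ s ∈ S, f s ≤ f a := by
  set m : E := (1 / 2 : ℝ) • a + (1 / 2 : ℝ) • b
  have hm : m ∈ frontier (convexHull ℝ S) :=
    hseg ⟨1 / 2, 1 / 2, by norm_num, by norm_num, by norm_num, rfl⟩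
  obtain ⟨f, u, hf, hfS, hfm⟩ := geometric_hahn_banach_of_nonempty_interior
    (convex_convexHull ℝ S) (convex_singleton m) (disjoint_singleton_right.2 hm.2) hS
    (singleton_nonempty m)
  have hle : ∀ s ∈ S, f s ≤ f m := fun s hs =>
    (hfS s (subset_convexHull ℝ S hs)).trans (hfm m rfl)
  have hfm' : f m = (f a + f b) / 2 := by simp only [m, map_add, map_smul, smul_eq_mul]; ring
  have hfa := hle a ha
  have hfb := hle b hb
  exact ⟨f, hf, by linarith, fun s hs => by linarith [hle s hs]⟩

theorem segment_subset_frontier_convexHull_iff (hS : (interior (convexHull ℝ S)).Nonempty)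
    (ha : a ∈ S) (hb : b ∈ S) :
    segment ℝ a b ⊆ frontier (convexHull ℝ S) ↔
      ∃ f : StrongDual ℝ E, f ≠ 0 ∧ f a = f b ∧ ∀ s ∈ S, f s ≤ f a :=
  ⟨exists_support_of_segment_subset_frontier hS ha hb,
    fun ⟨_, hf, hab, hfS⟩ => segment_subset_frontier_convexHull_of_support hf ha hb hab hfS⟩

end SupportingLine

local notation "ℝ²" => EuclideanSpace ℝ (Fin 2)

-- Positive iff `s` lies strictly to the left of the directed line from `a` to `b`.
def cross (a b s : ℝ²) : ℝ := (b 0 - a 0) * (s 1 - a 1) - (b 1 - a 1) * (s 0 - a 0)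

section Cross

variable {a b : ℝ²}

@[simp] theorem cross_self_left (a b : ℝ²) : cross a b a = 0 := by unfold cross; ring

@[simp] theorem cross_self_right (a b : ℝ²) : cross a b b = 0 := by unfold cross; ring

theorem sub_sq_add_sub_sq_pos (hab : a ≠ b) : 0 < (b 0 - a 0) ^ 2 + (b 1 - a 1) ^ 2 := by
  have hnorm : ‖b - a‖ ^ 2 = (b 0 - a 0) ^ 2 + (b 1 - a 1) ^ 2 := by
    simp [EuclideanSpace.norm_sq_eq, Fin.sum_univ_two]
  rw [← hnorm]
  exact pow_pos (norm_pos_iff.2 (sub_ne_zero.2 hab.symm)) 2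

theorem collinear_of_cross_eq_zero {s : ℝ²} (hab : a ≠ b) (h : cross a b s = 0) :
    Collinear ℝ ({a, b, s} : Set ℝ²) := by
  have hD := (sub_sq_add_sub_sq_pos hab).ne'
  have hs : s = AffineMap.lineMap a b (((s 0 - a 0) * (b 0 - a 0) + (s 1 - a 1) * (b 1 - a 1)) /
      ((b 0 - a 0) ^ 2 + (b 1 - a 1) ^ 2)) := by
    unfold cross at h
    ext i
    fin_cases i <;>
      simp only [Fin.zero_eta, Fin.mk_one, Fin.isValue, AffineMap.lineMap_apply_module',
        PiLp.add_apply, PiLp.smul_apply, PiLp.sub_apply, smul_eq_mul] <;> field_simp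
    · linear_combination (-(b 1 - a 1)) * h
    · linear_combination (b 0 - a 0) * h
  rw [pair_comm, insert_comm, hs]
  exact collinear_insert_of_mem_affineSpan_pair (AffineMap.lineMap_mem_affineSpan_pair _ _ _)

theorem dual_apply_eq_coord (f : StrongDual ℝ ℝ²) (x : ℝ²) :
    f x = x 0 * f (EuclideanSpace.single 0 1) + x 1 * f (EuclideanSpace.single 1 1) := by
  conv_lhs => rw [← (EuclideanSpace.basisFun (Fin 2) ℝ).sum_repr x]
  simp [Fin.sum_univ_two]

theorem exists_sub_eq_mul_cross (f : StrongDual ℝ ℝ²) (hab : a ≠ b) (hf : f a = f b) :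
    ∃ k : ℝ, ∀ x, f x - f a = k * cross a b x := by
  have hD := (sub_sq_add_sub_sq_pos hab).ne'
  set F0 := f (EuclideanSpace.single 0 1)
  set F1 := f (EuclideanSpace.single 1 1)
  rw [dual_apply_eq_coord f a, dual_apply_eq_coord f b] at hf
  refine ⟨(F1 * (b 0 - a 0) - F0 * (b 1 - a 1)) / ((b 0 - a 0) ^ 2 + (b 1 - a 1) ^ 2),
    fun x => ?_⟩
  rw [dual_apply_eq_coord f x, dual_apply_eq_coord f a, div_mul_eq_mul_div, eq_div_iff hD, cross]
  linear_combination (-((b 0 - a 0) * (x 0 - a 0) + (b 1 - a 1) * (x 1 - a 1))) * hf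

theorem exists_dual_sub_eq_cross (hab : a ≠ b) :
    ∃ g : StrongDual ℝ ℝ², g ≠ 0 ∧ ∀ x, g x - g a = cross a b x := by
  refine ⟨(b 0 - a 0) • EuclideanSpace.proj 1 - (b 1 - a 1) • EuclideanSpace.proj 0,
    fun hg => (sub_sq_add_sub_sq_pos hab).ne' ?_, fun x => by simp [cross]; ring⟩
  have h0 := congrArg (· (EuclideanSpace.single 0 1)) hg
  have h1 := congrArg (· (EuclideanSpace.single 1 1)) hg
  simp only [sub_apply, smul_apply, PiLp.proj_apply, PiLp.single_eq_same, PiLp.single_eq_of_ne,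
    ne_eq, zero_ne_one, one_ne_zero, not_false_eq_true, smul_eq_mul, mul_zero, mul_one, zero_sub,
    sub_zero, zero_apply] at h0 h1
  linear_combination (b 0 - a 0) * h1 - (b 1 - a 1) * h0

end Cross

theorem segment_subset_frontier_convexHull_iff_cross {S : Set ℝ²}
    (hS : (interior (convexHull ℝ S)).Nonempty) {a b : ℝ²} (ha : a ∈ S) (hb : b ∈ S)
    (hab : a ≠ b) :
    segment ℝ a b ⊆ frontier (convexHull ℝ S) ↔
      (∀ s ∈ S, 0 ≤ cross a b s) ∨ ∀ s ∈ S, cross a b s ≤ 0 := by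
  rw [segment_subset_frontier_convexHull_iff hS ha hb]
  constructor
  · rintro ⟨f, hf, hfab, hfS⟩
    obtain ⟨k, hk⟩ := exists_sub_eq_mul_cross f hab hfab
    have hk0 : k ≠ 0 := by
      rintro rfl
      refine hf (ContinuousLinearMap.ext fun x => ?_)
      have hx := hk x
      have h0 := hk 0
      simp only [zero_mul, map_zero, sub_eq_zero, zero_sub, neg_eq_zero] at hx h0
      simp [hx, h0]
    rcases hk0.lt_or_gt with hneg | hpos
    · exact Or.inl fun s hs => by nlinarith [hk s, hfS s hs]
    · exact Or.inr fun s hs => by nlinarith [hk s, hfS s hs]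
  · obtain ⟨g, hg, hga⟩ := exists_dual_sub_eq_cross hab
    rintro (hS | hS)
    · refine ⟨-g, neg_ne_zero.2 hg, ?_, fun s hs => ?_⟩ <;> simp only [neg_apply]
      · linarith [hga b, cross_self_right a b]
      · linarith [hga s, hS s hs]
    · refine ⟨g, hg, ?_, fun s hs => ?_⟩
      · linarith [hga b, cross_self_right a b]
      · linarith [hga s, hS s hs]

def InGeneralPosition {V : Type*} [AddCommGroup V] [Module ℝ V] (S : Set V) : Prop :=
  ∀ p ∈ S, ∀ q ∈ S, ∀ r ∈ S, p ≠ q → q ≠ r → p ≠ r → ¬ Collinear ℝ ({p, q, r} : Set V)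

theorem InGeneralPosition.cross_ne_zero {S : Set ℝ²} (hS : InGeneralPosition S) {a b s : ℝ²}
    (ha : a ∈ S) (hb : b ∈ S) (hs : s ∈ S) (hab : a ≠ b) (hsa : s ≠ a) (hsb : s ≠ b) :
    cross a b s ≠ 0 := fun h =>
  hS a ha b hb s hs hab (Ne.symm hsb) (Ne.symm hsa) (collinear_of_cross_eq_zero hab h)

theorem Set.exists_ne_ne_of_three_le_encard {α : Type*} {S : Set α} (hS : 3 ≤ S.encard) (p q : α) :
    ∃ r ∈ S, r ≠ p ∧ r ≠ q := by
  by_contra! h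
  have hsub : S ⊆ {p, q} := fun r hr => by
    by_cases hrp : r = p
    · exact Or.inl hrp
    · exact Or.inr (h r hr hrp)
  have := (hS.trans (encard_le_encard hsub)).trans (encard_insert_le _ _)
  norm_num at this

theorem InGeneralPosition.interior_convexHull_nonempty {V : Type*} [NormedAddCommGroup V]
    [NormedSpace ℝ V] [FiniteDimensional ℝ V] (hV : Module.finrank ℝ V = 2) {S : Set V}
    (hS : InGeneralPosition S) (hcard : 3 ≤ S.encard) : (interior (convexHull ℝ S)).Nonempty := by
  obtain ⟨p, q, hp, hq, hpq⟩ := one_lt_encard_iff.1 (lt_of_lt_of_le (by norm_num) hcard)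
  obtain ⟨r, hr, hrp, hrq⟩ := exists_ne_ne_of_three_le_encard hcard p q
  rw [interior_convexHull_nonempty_iff_affineSpan_eq_top]
  have htop : affineSpan ℝ (range ![p, q, r]) = ⊤ :=
    (affineIndependent_iff_not_collinear_set.2 (hS p hp q hq r hr hpq hrq.symm hrp.symm)
      ).affineSpan_eq_top_iff_card_eq_finrank_add_one.2 (by simp [hV])
  refine eq_top_mono (affineSpan_mono ℝ (range_subset_iff.2 fun i => ?_)) htop
  fin_cases i <;> assumption

-- The abscissa where the line `ab` meets `y = c` (junk when `a 1 = b 1`).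
noncomputable def abscissaAt (c : ℝ) (a b : ℝ²) : ℝ :=
  ((a 1 - c) * b 0 - (b 1 - c) * a 0) / (a 1 - b 1)

section Bridges

variable {A B : Set ℝ²} {c : ℝ} {a b a' b' : ℝ²}

theorem ne_of_mem_above_of_mem_below (hA : ∀ p ∈ A, c < p 1) (hB : ∀ p ∈ B, p 1 < c)
    (ha : a ∈ A) (hb : b ∈ B) : a ≠ b :=
  ne_of_apply_ne (· 1) ((hB b hb).trans (hA a ha)).ne'

theorem abscissaAt_sub_mul (hab : a 1 ≠ b 1) (hab' : a' 1 ≠ b' 1) :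
    (abscissaAt c a' b' - abscissaAt c a b) * ((a 1 - b 1) * (a' 1 - b' 1)) =
      (c - b' 1) * cross a b a' + (a' 1 - c) * cross a b b' := by
  have := sub_ne_zero.2 hab
  have := sub_ne_zero.2 hab'
  unfold abscissaAt cross
  field_simp
  ring

theorem abscissaAt_lt_of_cross_nonneg (hab : b 1 < a 1) (ha' : c < a' 1) (hb' : b' 1 < c)
    (h1 : 0 ≤ cross a b a') (h2 : 0 ≤ cross a b b') (h : 0 < cross a b a' ∨ 0 < cross a b b') :
    abscissaAt c a b < abscissaAt c a' b' := by
  have key := abscissaAt_sub_mul (c := c) hab.ne' (hb'.trans ha').ne'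
  have hpos : 0 < (c - b' 1) * cross a b a' + (a' 1 - c) * cross a b b' := by
    rcases h with h | h <;> nlinarith
  have hden : 0 < (a 1 - b 1) * (a' 1 - b' 1) := by nlinarith
  nlinarith

theorem abscissaAt_lt_of_cross_nonpos (hab : b 1 < a 1) (ha' : c < a' 1) (hb' : b' 1 < c)
    (h1 : cross a b a' ≤ 0) (h2 : cross a b b' ≤ 0) (h : cross a b a' < 0 ∨ cross a b b' < 0) :
    abscissaAt c a' b' < abscissaAt c a b := by
  have key := abscissaAt_sub_mul (c := c) hab.ne' (hb'.trans ha').ne'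
  have hneg : (c - b' 1) * cross a b a' + (a' 1 - c) * cross a b b' < 0 := by
    rcases h with h | h <;> nlinarith
  have hden : 0 < (a 1 - b 1) * (a' 1 - b' 1) := by nlinarith
  nlinarith

theorem forall_cross_nonneg_of_isMin (hA : ∀ p ∈ A, c < p 1) (hB : ∀ p ∈ B, p 1 < c)
    (ha : a ∈ A) (hb : b ∈ B)
    (hmin : ∀ p ∈ A ×ˢ B, abscissaAt c a b ≤ abscissaAt c p.1 p.2) :
    ∀ s ∈ A ∪ B, 0 ≤ cross a b s := by
  have hab : b 1 < a 1 := (hB b hb).trans (hA a ha)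
  intro s hs
  by_contra! hneg
  rcases hs with hs | hs
  · exact (hmin (s, b) ⟨hs, hb⟩).not_gt <| abscissaAt_lt_of_cross_nonpos hab (hA s hs) (hB b hb)
      hneg.le (cross_self_right a b).le (Or.inl hneg)
  · exact (hmin (a, s) ⟨ha, hs⟩).not_gt <| abscissaAt_lt_of_cross_nonpos hab (hA a ha) (hB s hs)
      (cross_self_left a b).le hneg.le (Or.inr hneg)

theorem forall_cross_nonpos_of_isMax (hA : ∀ p ∈ A, c < p 1) (hB : ∀ p ∈ B, p 1 < c)
    (ha : a ∈ A) (hb : b ∈ B)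
    (hmax : ∀ p ∈ A ×ˢ B, abscissaAt c p.1 p.2 ≤ abscissaAt c a b) :
    ∀ s ∈ A ∪ B, cross a b s ≤ 0 := by
  have hab : b 1 < a 1 := (hB b hb).trans (hA a ha)
  intro s hs
  by_contra! hpos
  rcases hs with hs | hs
  · exact (hmax (s, b) ⟨hs, hb⟩).not_gt <| abscissaAt_lt_of_cross_nonneg hab (hA s hs) (hB b hb)
      hpos.le (cross_self_right a b).ge (Or.inl hpos)
  · exact (hmax (a, s) ⟨ha, hs⟩).not_gt <| abscissaAt_lt_of_cross_nonneg hab (hA a ha) (hB s hs)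
      (cross_self_left a b).ge hpos.le (Or.inr hpos)

theorem cross_ne_zero_or_ne_zero (hA : ∀ p ∈ A, c < p 1) (hB : ∀ p ∈ B, p 1 < c)
    (hgp : InGeneralPosition (A ∪ B)) (ha : a ∈ A) (hb : b ∈ B) (ha' : a' ∈ A) (hb' : b' ∈ B)
    (hne : (a', b') ≠ (a, b)) : cross a b a' ≠ 0 ∨ cross a b b' ≠ 0 := by
  have hAB : ∀ {p q}, p ∈ A → q ∈ B → p ≠ q := ne_of_mem_above_of_mem_below hA hB
  by_contra! h
  refine hne (Prod.ext ?_ ?_)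
  · by_contra ha'a
    exact hgp.cross_ne_zero (Or.inl ha) (Or.inr hb) (Or.inl ha') (hAB ha hb) ha'a (hAB ha' hb)
      h.1
  · by_contra hb'b
    exact hgp.cross_ne_zero (Or.inl ha) (Or.inr hb) (Or.inr hb') (hAB ha hb)
      (hAB ha hb').symm hb'b h.2

theorem eq_of_forall_cross_nonneg (hA : ∀ p ∈ A, c < p 1) (hB : ∀ p ∈ B, p 1 < c)
    (hgp : InGeneralPosition (A ∪ B)) (ha : a ∈ A) (hb : b ∈ B)
    (hmin : ∀ p ∈ A ×ˢ B, abscissaAt c a b ≤ abscissaAt c p.1 p.2) (ha' : a' ∈ A) (hb' : b' ∈ B)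
    (hleft : ∀ s ∈ A ∪ B, 0 ≤ cross a' b' s) : (a', b') = (a, b) := by
  by_contra hne
  refine (hmin (a', b') ⟨ha', hb'⟩).not_gt <| abscissaAt_lt_of_cross_nonneg
    ((hB b' hb').trans (hA a' ha')) (hA a ha) (hB b hb) (hleft a (Or.inl ha)) (hleft b (Or.inr hb))
    ?_
  exact (cross_ne_zero_or_ne_zero hA hB hgp ha' hb' ha hb (Ne.symm hne)).imp
    (hleft a (Or.inl ha)).lt_of_ne' (hleft b (Or.inr hb)).lt_of_ne'

theorem eq_of_forall_cross_nonpos (hA : ∀ p ∈ A, c < p 1) (hB : ∀ p ∈ B, p 1 < c)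
    (hgp : InGeneralPosition (A ∪ B)) (ha : a ∈ A) (hb : b ∈ B)
    (hmax : ∀ p ∈ A ×ˢ B, abscissaAt c p.1 p.2 ≤ abscissaAt c a b) (ha' : a' ∈ A) (hb' : b' ∈ B)
    (hright : ∀ s ∈ A ∪ B, cross a' b' s ≤ 0) : (a', b') = (a, b) := by
  by_contra hne
  refine (hmax (a', b') ⟨ha', hb'⟩).not_gt <| abscissaAt_lt_of_cross_nonpos
    ((hB b' hb').trans (hA a' ha')) (hA a ha) (hB b hb) (hright a (Or.inl ha))
    (hright b (Or.inr hb)) ?_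
  exact (cross_ne_zero_or_ne_zero hA hB hgp ha' hb' ha hb (Ne.symm hne)).imp
    (hright a (Or.inl ha)).lt_of_ne (hright b (Or.inr hb)).lt_of_ne

theorem mk_ne_mk_of_isMin_of_isMax (hA : ∀ p ∈ A, c < p 1) (hB : ∀ p ∈ B, p 1 < c)
    (hgp : InGeneralPosition (A ∪ B)) (hcard : 3 ≤ (A ∪ B).encard)
    (ha : a ∈ A) (hb : b ∈ B) (hmin : ∀ p ∈ A ×ˢ B, abscissaAt c a b ≤ abscissaAt c p.1 p.2)
    (ha' : a' ∈ A) (hb' : b' ∈ B) (hmax : ∀ p ∈ A ×ˢ B, abscissaAt c p.1 p.2 ≤ abscissaAt c a' b') :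
    (a, b) ≠ (a', b') := by
  intro h
  simp only [Prod.mk.injEq] at h
  obtain ⟨rfl, rfl⟩ := h
  obtain ⟨w, hw, hwa, hwb⟩ := exists_ne_ne_of_three_le_encard hcard a b
  exact hgp.cross_ne_zero (Or.inl ha) (Or.inr hb) hw (ne_of_mem_above_of_mem_below hA hB ha hb)
    hwa hwb
    (le_antisymm (forall_cross_nonpos_of_isMax hA hB ha hb hmax w hw)
      (forall_cross_nonneg_of_isMin hA hB ha hb hmin w hw))

def bridges (A B : Set ℝ²) : Set (ℝ² × ℝ²) :=
  {ab | ab.1 ∈ A ∧ ab.2 ∈ B ∧ segment ℝ ab.1 ab.2 ⊆ frontier (convexHull ℝ (A ∪ B))}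

theorem bridges_eq_pair (hA : ∀ p ∈ A, c < p 1) (hB : ∀ p ∈ B, p 1 < c)
    (hgp : InGeneralPosition (A ∪ B)) (hint : (interior (convexHull ℝ (A ∪ B))).Nonempty)
    (ha : a ∈ A) (hb : b ∈ B) (hmin : ∀ p ∈ A ×ˢ B, abscissaAt c a b ≤ abscissaAt c p.1 p.2)
    (ha' : a' ∈ A) (hb' : b' ∈ B) (hmax : ∀ p ∈ A ×ˢ B, abscissaAt c p.1 p.2 ≤ abscissaAt c a' b') :
    bridges A B = {(a, b), (a', b')} := by
  have hiff := fun {p q} (hp : p ∈ A) (hq : q ∈ B) =>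
    segment_subset_frontier_convexHull_iff_cross hint (Or.inl hp) (Or.inr hq)
      (ne_of_mem_above_of_mem_below hA hB hp hq)
  ext ⟨p, q⟩
  simp only [bridges, mem_ofPred_eq, mem_insert_iff, mem_singleton_iff]
  constructor
  · rintro ⟨hp, hq, hseg⟩
    exact ((hiff hp hq).1 hseg).imp (eq_of_forall_cross_nonneg hA hB hgp ha hb hmin hp hq)
      (eq_of_forall_cross_nonpos hA hB hgp ha' hb' hmax hp hq)
  · rintro (h | h) <;> rw [Prod.mk.injEq] at h <;> obtain ⟨rfl, rfl⟩ := h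
    · exact ⟨ha, hb, (hiff ha hb).2 (Or.inl (forall_cross_nonneg_of_isMin hA hB ha hb hmin))⟩
    · exact ⟨ha', hb', (hiff ha' hb').2 (Or.inr (forall_cross_nonpos_of_isMax hA hB ha' hb' hmax))⟩

end Bridges

/-- If `A` lies strictly above the line `y = c`, `B` lies strictly below it,
`A ∪ B` is in general position and has at least three points, then there are
exactly two bridges of `(A, B)`: pairs `(a, b) ∈ A × B` whose segment lies on the
boundary of `convexHull (A ∪ B)`. -/
theorem bridges_eq_two
    (A B : Set (EuclideanSpace ℝ (Fin 2))) (c : ℝ)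
    (hAfin : A.Finite) (hBfin : B.Finite)
    (hAne : A.Nonempty) (hBne : B.Nonempty)
    (hAabove : ∀ p ∈ A, c < p 1)
    (hBbelow : ∀ p ∈ B, p 1 < c)
    (hgen : ∀ p ∈ A ∪ B, ∀ q ∈ A ∪ B, ∀ r ∈ A ∪ B, p ≠ q → q ≠ r → p ≠ r →
      ¬ Collinear ℝ ({p, q, r} : Set (EuclideanSpace ℝ (Fin 2))))
    (hcard : 3 ≤ (A ∪ B).encard) :
    {ab : EuclideanSpace ℝ (Fin 2) × EuclideanSpace ℝ (Fin 2) |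
        ab.1 ∈ A ∧ ab.2 ∈ B ∧
          segment ℝ ab.1 ab.2 ⊆ frontier (convexHull ℝ (A ∪ B))}.encard = 2 := by
  have hgp : InGeneralPosition (A ∪ B) := hgen
  obtain ⟨⟨a, b⟩, ⟨ha, hb⟩, hmin⟩ :=
    exists_min_image _ (fun p => abscissaAt c p.1 p.2) (hAfin.prod hBfin) (hAne.prod hBne)
  obtain ⟨⟨a', b'⟩, ⟨ha', hb'⟩, hmax⟩ :=
    exists_max_image _ (fun p => abscissaAt c p.1 p.2) (hAfin.prod hBfin) (hAne.prod hBne)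
  change (bridges A B).encard = 2
  rw [bridges_eq_pair hAabove hBbelow hgp
      (hgp.interior_convexHull_nonempty finrank_euclideanSpace_fin hcard) ha hb hmin ha' hb' hmax,
    encard_pair (mk_ne_mk_of_isMin_of_isMax hAabove hBbelow hgp hcard ha hb hmin ha' hb' hmax)]
end

section
/- Let A and B be nonempty finite subsets of ℝ² such that A lies strictly above the horizontal line y = c, B lies strictly below it, and A ∪ B is in general position. If a ∈ A, b ∈ B, and the closed segment [a,b] is contained in the frontier of convexHull(A ∪ B), then a is an extreme point of convexHull(A) and b is an extreme point of convexHull(B). -/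
/-!
Suppose `a` is not an extreme point of `conv A`. Since `A` is finite, `a` lies in the convex
hull of `A \ {a}` (Krein–Milman), hence in an open segment `(z, w)` with `z ∈ A \ {a}` and
`w ∈ conv A`. General position makes `z, a, b` non-collinear, so `z, w, b` span a genuine
triangle inside `conv (A ∪ B)`, and since `a` lies on the open edge `(z, w)`, the open segment
`(a, b)` runs through the interior of that triangle. This contradicts `[a, b]` lying on the
frontier of `conv (A ∪ B)`. The points of `A` and `B` are distinct because the line `y = c`
separates them, and the claim for `b` is the same argument with `A` and `B` swapped.
-/

open Set Module

section OrderedField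

variable {𝕜 E : Type*} [Field 𝕜] [LinearOrder 𝕜] [IsStrictOrderedRing 𝕜]
  [AddCommGroup E] [Module 𝕜 E]

theorem exists_mem_openSegment_of_mem_convexHull_of_notMem {s : Set E} (hs : s.Finite) {x : E}
    (hx : x ∈ convexHull 𝕜 s) (hxs : x ∉ s) :
    ∃ y ∈ s, ∃ z ∈ convexHull 𝕜 s, x ∈ openSegment 𝕜 y z := by
  induction s, hs using Set.Finite.induction_on with
  | empty => simp at hx
  | @insert y t _ _ ih =>
    have hconv : convexHull 𝕜 t ⊆ convexHull 𝕜 (insert y t) :=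
      convexHull_mono (subset_insert y t)
    obtain rfl | ht := t.eq_empty_or_nonempty
    · simp_all
    rw [convexHull_insert ht, mem_convexJoin] at hx
    obtain ⟨y', hy', z, hz, hxyz⟩ := hx
    rw [eq_of_mem_singleton hy'] at hxyz
    by_cases hxz : x = z
    · subst hxz
      obtain ⟨y', hy', z', hz', hx⟩ := ih hz (fun h ↦ hxs (mem_insert_of_mem y h))
      exact ⟨y', mem_insert_of_mem y hy', z', hconv hz', hx⟩
    · exact ⟨y, mem_insert y t, z, hconv hz,
        mem_openSegment_of_ne_left_right (fun h ↦ hxs (h ▸ mem_insert y t)) (Ne.symm hxz) hxyz⟩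

theorem affineIndependent_of_mem_openSegment_of_not_collinear {z w a b : E}
    (ha : a ∈ openSegment 𝕜 z w) (hza : z ≠ a) (hzab : ¬ Collinear 𝕜 {z, a, b}) :
    AffineIndependent 𝕜 ![z, w, b] := by
  rw [affineIndependent_iff_not_collinear_set]
  intro hzwb
  have hzw : z ≠ w := by
    rintro rfl
    rw [openSegment_same] at ha
    exact hza ha.symm
  have haline : a ∈ line[𝕜, z, w] :=
    (mem_segment_iff_wbtw.1 (openSegment_subset_segment 𝕜 z w ha)).mem_affineSpan
  exact hzab <| collinear_triple_of_mem_affineSpan_pair (left_mem_affineSpan_pair 𝕜 z w) haline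
    (hzwb.mem_affineSpan_of_mem_of_ne (by simp) (by simp) (by simp) hzw)

end OrderedField

section Normed

variable {E : Type*} [NormedAddCommGroup E] [NormedSpace ℝ E]

theorem mem_convexHull_sdiff_of_notMem_extremePoints {A : Set E} (hA : A.Finite) {a : E}
    (ha : a ∈ A) (hext : a ∉ (convexHull ℝ A).extremePoints ℝ) :
    a ∈ convexHull ℝ (A \ {a}) := by
  have hsub : (convexHull ℝ A).extremePoints ℝ ⊆ A \ {a} := fun x hx ↦
    ⟨extremePoints_convexHull_subset hx, fun hxa ↦ hext (eq_of_mem_singleton hxa ▸ hx)⟩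
  have hclosed : IsClosed (convexHull ℝ (A \ {a})) :=
    (hA.subset sdiff_subset).isCompact_convexHull ℝ |>.isClosed
  rw [← hclosed.closure_eq]
  refine closure_mono (convexHull_mono hsub) ?_
  rw [closure_convexHull_extremePoints (hA.isCompact_convexHull ℝ) (convex_convexHull ℝ A)]
  exact subset_convexHull ℝ A ha

theorem AffineBasis.affineCombination_mem_interior_convexHull {ι : Type*} [Fintype ι]
    (b : AffineBasis ι ℝ E) {w : ι → ℝ} (hw : ∑ i, w i = 1) (hpos : ∀ i, 0 < w i) :
    Finset.univ.affineCombination ℝ b w ∈ interior (convexHull ℝ (range b)) := by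
  rw [b.interior_convexHull]
  intro i
  rw [b.coord_apply_combination_of_mem (Finset.mem_univ i) hw]
  exact hpos i

theorem openSegment_subset_interior_convexHull_triple [FiniteDimensional ℝ E]
    (hE : finrank ℝ E = 2) {z w b a : E} (hind : AffineIndependent ℝ ![z, w, b])
    (ha : a ∈ openSegment ℝ z w) :
    openSegment ℝ a b ⊆ interior (convexHull ℝ {z, w, b}) := by
  rintro p ⟨s, r, hs, hr, hsr, rfl⟩
  obtain ⟨t, u, ht, hu, htu, rfl⟩ := ha
  have htop : affineSpan ℝ (range ![z, w, b]) = ⊤ :=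
    hind.affineSpan_eq_top_iff_card_eq_finrank_add_one.2 (by simp [hE])
  let T : AffineBasis (Fin 3) ℝ E := ⟨![z, w, b], hind, htop⟩
  have hT : (T : Fin 3 → E) = ![z, w, b] := rfl
  have hsum : ∑ i, ![s * t, s * u, r] i = 1 := by
    simp only [Fin.sum_univ_three, Matrix.cons_val_zero, Matrix.cons_val_one,
      Matrix.cons_val_two, Matrix.head_cons, Matrix.tail_cons]
    linear_combination s * htu + hsr
  have hp : s • (t • z + u • w) + r • b =
      Finset.univ.affineCombination ℝ T ![s * t, s * u, r] := by
    rw [Finset.affineCombination_eq_linear_combination _ _ _ hsum]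
    simp [Fin.sum_univ_three, hT, mul_smul]
  have hrange : range T = {z, w, b} := by
    simp only [hT, Matrix.range_cons, Matrix.range_empty, singleton_union, insert_empty_eq]
  rw [hp, ← hrange]
  refine T.affineCombination_mem_interior_convexHull hsum fun i ↦ ?_
  fin_cases i
  exacts [mul_pos hs ht, mul_pos hs hu, hr]

theorem mem_extremePoints_convexHull_of_segment_subset_frontier [FiniteDimensional ℝ E]
    (hE : finrank ℝ E = 2) {A K : Set E} {a b : E} (hA : A.Finite) (hK : Convex ℝ K)
    (hAK : A ⊆ K) (hbK : b ∈ K) (ha : a ∈ A)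
    (hline : ∀ z ∈ A, z ≠ a → ¬ Collinear ℝ {z, a, b}) (hseg : segment ℝ a b ⊆ frontier K) :
    a ∈ (convexHull ℝ A).extremePoints ℝ := by
  by_contra hext
  obtain ⟨z, ⟨hzA, hza : z ≠ a⟩, w, hw, haw⟩ :=
    exists_mem_openSegment_of_mem_convexHull_of_notMem (hA.subset sdiff_subset)
      (mem_convexHull_sdiff_of_notMem_extremePoints hA ha hext) (fun h ↦ h.2 rfl)
  have hwK : w ∈ K := convexHull_min hAK hK (convexHull_mono sdiff_subset hw)
  have hind := affineIndependent_of_mem_openSegment_of_not_collinear haw hza (hline z hzA hza)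
  have hint : openSegment ℝ a b ⊆ interior K :=
    (openSegment_subset_interior_convexHull_triple hE hind haw).trans <| interior_mono <|
      convexHull_min (insert_subset (hAK hzA) (insert_subset hwK (singleton_subset_iff.2 hbK))) hK
  have hmid := midpoint_mem_openSegment (𝕜 := ℝ) a b
  exact disjoint_interior_frontier.notMem_of_mem_left (hint hmid)
    (hseg (openSegment_subset_segment ℝ a b hmid))

end Normed

theorem bridge_endpoints_extreme_general
    (A B : Set (EuclideanSpace ℝ (Fin 2))) (c : ℝ)
    (hAfin : A.Finite) (hBfin : B.Finite)
    (hAabove : ∀ p ∈ A, c < p 1)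
    (hBbelow : ∀ p ∈ B, p 1 < c)
    (hgen : ∀ p ∈ A ∪ B, ∀ q ∈ A ∪ B, ∀ r ∈ A ∪ B, p ≠ q → q ≠ r → p ≠ r →
      ¬ Collinear ℝ ({p, q, r} : Set (EuclideanSpace ℝ (Fin 2))))
    (a b : EuclideanSpace ℝ (Fin 2)) (ha : a ∈ A) (hb : b ∈ B)
    (hseg : segment ℝ a b ⊆ frontier (convexHull ℝ (A ∪ B))) :
    a ∈ Set.extremePoints ℝ (convexHull ℝ A) ∧
      b ∈ Set.extremePoints ℝ (convexHull ℝ B) := by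
  have hAB : ∀ p ∈ A, ∀ q ∈ B, p ≠ q := fun p hp q hq hpq ↦
    (hAabove p hp).not_gt (hpq ▸ hBbelow q hq)
  have hE : finrank ℝ (EuclideanSpace ℝ (Fin 2)) = 2 := by simp
  have hK := convex_convexHull ℝ (A ∪ B)
  constructor
  · refine mem_extremePoints_convexHull_of_segment_subset_frontier hE hAfin hK
      (subset_union_left.trans (subset_convexHull ℝ _)) (subset_convexHull ℝ _ (Or.inr hb)) ha
      (fun z hz hza ↦ ?_) hseg
    exact hgen z (Or.inl hz) a (Or.inl ha) b (Or.inr hb) hza (hAB a ha b hb) (hAB z hz b hb)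
  · refine mem_extremePoints_convexHull_of_segment_subset_frontier hE hBfin hK
      (subset_union_right.trans (subset_convexHull ℝ _)) (subset_convexHull ℝ _ (Or.inl ha)) hb
      (fun z hz hzb ↦ ?_) (segment_symm ℝ b a ▸ hseg)
    exact hgen z (Or.inr hz) b (Or.inr hb) a (Or.inl ha) hzb (hAB a ha b hb).symm
      (hAB a ha z hz).symm

/-- If `A` lies strictly above the line `y = c`, `B` lies strictly below it, and
`A ∪ B` is in general position, then each endpoint of a bridge of `(A, B)` is an
extreme point of the convex hull of its own side. -/
theorem bridge_endpoints_extreme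
    (A B : Set (EuclideanSpace ℝ (Fin 2))) (c : ℝ)
    (hAfin : A.Finite) (hBfin : B.Finite)
    (hAne : A.Nonempty) (hBne : B.Nonempty)
    (hAabove : ∀ p ∈ A, c < p 1)
    (hBbelow : ∀ p ∈ B, p 1 < c)
    (hgen : ∀ p ∈ A ∪ B, ∀ q ∈ A ∪ B, ∀ r ∈ A ∪ B, p ≠ q → q ≠ r → p ≠ r →
      ¬ Collinear ℝ ({p, q, r} : Set (EuclideanSpace ℝ (Fin 2))))
    (a b : EuclideanSpace ℝ (Fin 2)) (ha : a ∈ A) (hb : b ∈ B)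
    (hseg : segment ℝ a b ⊆ frontier (convexHull ℝ (A ∪ B))) :
    a ∈ Set.extremePoints ℝ (convexHull ℝ A) ∧
      b ∈ Set.extremePoints ℝ (convexHull ℝ B) :=
  bridge_endpoints_extreme_general A B c hAfin hBfin hAabove hBbelow hgen a b ha hb hseg
end
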